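/- arXiv:2009.10921 — 2 statements merged into one kernel-verified Lean document; each statement's English description precedes it below -/
import Mathlib

section
/- (Feynman's disentangling theorem) For time-ordered exponentials of bounded operator-valued continuous functions A, B on [τ₀, τ₁]: 𝕋exp(∫_{τ₀}^{τ₁}(A(τ')+B(τ'))dτ') = 𝕋exp(∫_{τ₀}^{τ₁}A(τ')dτ') · 𝕋exp(∫_{τ₀}^{τ₁}B̃(τ')dτ'), where B̃(τ) = [𝕋exp(∫_{τ₀}^{τ}A dτ')]^{−1} · B(τ) · 𝕋exp(∫_{τ₀}^{τ}A dτ'). -/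
/-!
The product `W = U_A · U_B̃` satisfies the same linear ODE `W' = (A + B) W` as `U_{A+B}`: by the
product rule `W' = A U_A U_B̃ + U_A (U_A⁻¹ B U_A) U_B̃`, and `U_A U_A⁻¹ = 1` collapses the second
term to `B W`. Both start at `1`, and a linear ODE with continuous coefficient has unique solutions
(Grönwall, the coefficient being bounded on compact time intervals).
-/

open ContinuousLinearMap Set

section NormedAlgebra

variable {𝔸 : Type*} [NormedRing 𝔸]

theorem lipschitzWith_mul_left (a : 𝔸) : LipschitzWith ‖a‖₊ (a * ·) :=
  LipschitzWith.of_dist_le_mul fun x y => by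
    simpa only [dist_eq_norm, ← mul_sub, coe_nnnorm] using norm_mul_le a (x - y)

variable [NormedAlgebra ℝ 𝔸]

theorem eq_of_hasDerivAt_mul_left {F U V : ℝ → 𝔸} (hF : Continuous F)
    (hU : ∀ t, HasDerivAt U (F t * U t) t) (hV : ∀ t, HasDerivAt V (F t * V t) t)
    {t₀ : ℝ} (h₀ : U t₀ = V t₀) : U = V := by
  funext t
  set a := min t₀ t - 1
  set b := max t₀ t + 1
  obtain ⟨C, hC⟩ := (isCompact_Icc (a := a) (b := b)).exists_bound_of_continuousOn hF.continuousOn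
  have hLip : ∀ s ∈ Ioo a b, LipschitzOnWith C.toNNReal (F s * ·) univ := fun s hs =>
    ((lipschitzWith_mul_left (F s)).weaken
      (NNReal.le_toNNReal_of_coe_le (hC s (Ioo_subset_Icc_self hs)))).lipschitzOnWith
  have hmem : ∀ s, min t₀ t ≤ s → s ≤ max t₀ t → s ∈ Ioo a b := fun s h₁ h₂ =>
    ⟨by linarith, by linarith⟩
  exact ODE_solution_unique_of_mem_Ioo hLip (hmem t₀ (min_le_left _ _) (le_max_left _ _))
    (fun s _ => ⟨hU s, mem_univ _⟩) (fun s _ => ⟨hV s, mem_univ _⟩) h₀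
    (hmem t (min_le_right _ _) (le_max_right _ _))

theorem HasDerivAt.mul_interaction {U V W : ℝ → 𝔸} {a b : 𝔸} {t : ℝ}
    (hU : HasDerivAt U (a * U t) t) (hUV : U t * V t = 1)
    (hW : HasDerivAt W (V t * b * U t * W t) t) :
    HasDerivAt (fun s => U s * W s) ((a + b) * (U t * W t)) t := by
  refine (hU.mul hW).congr_deriv ?_
  calc a * U t * W t + U t * (V t * b * U t * W t)
      = a * U t * W t + (U t * V t) * b * U t * W t := by noncomm_ring
    _ = (a + b) * (U t * W t) := by rw [hUV]; noncomm_ring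

end NormedAlgebra

theorem feynman_disentangling_general
    {E : Type*} [NormedAddCommGroup E] [NormedSpace ℂ E]
    (τ₀ τ₁ : ℝ)
    (A B : ℝ → E →L[ℂ] E) (hA : Continuous A) (hB : Continuous B)
    (UA UAB UB VA : ℝ → E →L[ℂ] E)
    (hUA0 : UA τ₀ = 1) (hUAB0 : UAB τ₀ = 1) (hUB0 : UB τ₀ = 1)
    (hUA : ∀ τ, HasDerivAt UA (A τ ∘L UA τ) τ)
    (hUAB : ∀ τ, HasDerivAt UAB ((A τ + B τ) ∘L UAB τ) τ)
    (hVA : ∀ τ, VA τ ∘L UA τ = 1 ∧ UA τ ∘L VA τ = 1)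
    (hUB : ∀ τ, HasDerivAt UB (((VA τ ∘L B τ) ∘L UA τ) ∘L UB τ) τ) :
    UAB τ₁ = UA τ₁ ∘L UB τ₁ := by
  -- `f ∘L g` is definitionally `f * g` in the ring `E →L[ℂ] E`, so the hypotheses apply as they are.
  have hW : ∀ τ, HasDerivAt (fun s => UA s * UB s) ((A τ + B τ) * (UA τ * UB τ)) τ :=
    fun τ => (hUA τ).mul_interaction (hVA τ).2 (hUB τ)
  have hinit : UAB τ₀ = UA τ₀ * UB τ₀ := by rw [hUAB0, hUA0, hUB0, one_mul]
  exact congrFun (eq_of_hasDerivAt_mul_left (hA.add hB) hUAB hW hinit) τ₁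

/-- Feynman's disentangling theorem for time-ordered exponentials, phrased via
the defining ODEs of the time-ordered exponentials. -/
theorem feynman_disentangling
    {E : Type*} [NormedAddCommGroup E] [NormedSpace ℂ E] [FiniteDimensional ℂ E]
    (τ₀ τ₁ : ℝ) (hτ : τ₀ ≤ τ₁)
    (A B : ℝ → E →L[ℂ] E) (hA : Continuous A) (hB : Continuous B)
    (UA UAB UB VA : ℝ → E →L[ℂ] E)
    (hUA0 : UA τ₀ = 1) (hUAB0 : UAB τ₀ = 1) (hUB0 : UB τ₀ = 1)
    (hUA : ∀ τ, HasDerivAt UA (A τ ∘L UA τ) τ)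
    (hUAB : ∀ τ, HasDerivAt UAB ((A τ + B τ) ∘L UAB τ) τ)
    (hVA : ∀ τ, VA τ ∘L UA τ = 1 ∧ UA τ ∘L VA τ = 1)
    (hUB : ∀ τ, HasDerivAt UB (((VA τ ∘L B τ) ∘L UA τ) ∘L UB τ) τ) :
    UAB τ₁ = UA τ₁ ∘L UB τ₁ :=
  feynman_disentangling_general τ₀ τ₁ A B hA hB UA UAB UB VA hUA0 hUAB0 hUB0 hUA hUAB hVA hUB
end

section
/- (First-order Trotter error bound for two bounded operators) For bounded operators A, B on a finite-dimensional Hilbert space and t ∈ ℝ, ‖e^{−i(A+B)t} − e^{−iAt}e^{−iBt}‖ ≤ ‖[A,B]‖·t²/2. -/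
/-!
Write `E_x(s) = exp (s • x)`. Along `s ∈ [0, t]` the interpolation
`E_{a+b}(t - s) E_a(s) E_b(s)` runs from `E_{a+b}(t)` to `E_a(t) E_b(t)`, and its derivative is
`E_{a+b}(t - s) [E_a(s), b] E_b(s)`. The same interpolation trick applied to
`E_a(s - u) b E_a(u)` gives `‖[E_a(s), b]‖ ≤ s ‖[a, b]‖`. If all three exponentials are
contractions for nonnegative times, integrating the derivative gives the bound `t² / 2 ‖[a, b]‖`.
For `x = -i A` with `A` self-adjoint, `E_x(s)` is unitary, hence a contraction.
-/

open NormedSpace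

theorem norm_sub_le_of_norm_deriv_le_mul_pow {E : Type*} [NormedAddCommGroup E]
    [NormedSpace ℝ E] {f f' : ℝ → E} {C t : ℝ} (n : ℕ) (ht : 0 ≤ t)
    (hf : ∀ s, HasDerivAt f (f' s) s) (bound : ∀ s ∈ Set.Icc 0 t, ‖f' s‖ ≤ C * s ^ n) :
    ‖f t - f 0‖ ≤ C * t ^ (n + 1) / (n + 1) := by
  have hB (s : ℝ) : HasDerivAt (fun s => C * s ^ (n + 1) / (n + 1)) (C * s ^ n) s := by
    refine (((hasDerivAt_pow (n + 1) s).const_mul C).div_const _).congr_deriv ?_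
    rw [Nat.add_sub_cancel]
    push_cast
    field_simp
  refine image_norm_le_of_norm_deriv_right_le_deriv_boundary (f := fun s => f s - f 0)
    (fun s _ => ((hf s).sub_const _).continuousAt.continuousWithinAt)
    (fun s _ => ((hf s).sub_const _).hasDerivWithinAt) (by simp) hB
    (fun s hs => bound s (Set.Ico_subset_Icc_self hs)) (Set.right_mem_Icc.2 ht)

theorem norm_mul_mul_le_of_norm_le_one {R : Type*} [NonUnitalSeminormedRing R] {x z : R}
    (hx : ‖x‖ ≤ 1) (hz : ‖z‖ ≤ 1) (y : R) : ‖x * y * z‖ ≤ ‖y‖ :=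
  calc ‖x * y * z‖ ≤ ‖x‖ * ‖y‖ * ‖z‖ := norm_mul₃_le
    _ ≤ 1 * ‖y‖ * 1 := by gcongr
    _ = ‖y‖ := by ring

section ContractionSemigroup

variable {𝔸 : Type*} [NormedRing 𝔸] [NormedAlgebra ℝ 𝔸] [CompleteSpace 𝔸]

theorem hasDerivAt_exp_sub_smul_mul (x : 𝔸) {g : ℝ → 𝔸} {g' : 𝔸} (t : ℝ) {s : ℝ}
    (hg : HasDerivAt g g' s) :
    HasDerivAt (fun u => exp ((t - u) • x) * g u) (exp ((t - s) • x) * (g' - x * g s)) s := by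
  have hexp : HasDerivAt (fun u : ℝ => exp ((t - u) • x)) (-(exp ((t - s) • x) * x)) s := by
    simpa [Function.comp_def] using
      (hasDerivAt_exp_smul_const x (t - s)).scomp s ((hasDerivAt_id s).const_sub t)
  refine (hexp.mul hg).congr_deriv ?_
  rw [mul_sub, neg_mul, mul_assoc]
  abel

variable {a : 𝔸}

theorem norm_mul_exp_smul_sub_exp_smul_mul_le (ha : ∀ s : ℝ, 0 ≤ s → ‖exp (s • a)‖ ≤ 1) (b : 𝔸)
    {s : ℝ} (hs : 0 ≤ s) : ‖b * exp (s • a) - exp (s • a) * b‖ ≤ s * ‖a * b - b * a‖ := by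
  have hderiv (u : ℝ) := hasDerivAt_exp_sub_smul_mul a s
    ((hasDerivAt_exp_smul_const' a u).const_mul b)
  have hbound : ∀ u ∈ Set.Icc 0 s,
      ‖exp ((s - u) • a) * (b * (a * exp (u • a)) - a * (b * exp (u • a)))‖
        ≤ ‖a * b - b * a‖ * u ^ 0 := by
    intro u ⟨hu0, hus⟩
    rw [pow_zero, mul_one, ← norm_sub_rev, ← mul_assoc, ← mul_assoc, ← sub_mul, ← mul_assoc]
    exact norm_mul_mul_le_of_norm_le_one (ha _ (sub_nonneg.2 hus)) (ha u hu0) _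
  simpa [mul_comm s] using norm_sub_le_of_norm_deriv_le_mul_pow 0 hs hderiv hbound

theorem norm_exp_add_sub_exp_mul_exp_le {b : 𝔸} (ha : ∀ s : ℝ, 0 ≤ s → ‖exp (s • a)‖ ≤ 1)
    (hb : ∀ s : ℝ, 0 ≤ s → ‖exp (s • b)‖ ≤ 1) (hab : ∀ s : ℝ, 0 ≤ s → ‖exp (s • (a + b))‖ ≤ 1)
    {t : ℝ} (ht : 0 ≤ t) :
    ‖exp (t • (a + b)) - exp (t • a) * exp (t • b)‖ ≤ t ^ 2 / 2 * ‖a * b - b * a‖ := by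
  have hderiv (s : ℝ) := hasDerivAt_exp_sub_smul_mul (a + b) t
    ((hasDerivAt_exp_smul_const' a s).mul (hasDerivAt_exp_smul_const' b s))
  have hbound : ∀ s ∈ Set.Icc 0 t,
      ‖exp ((t - s) • (a + b)) * (a * exp (s • a) * exp (s • b)
        + exp (s • a) * (b * exp (s • b)) - (a + b) * (exp (s • a) * exp (s • b)))‖
        ≤ ‖a * b - b * a‖ * s ^ 1 := by
    intro s ⟨hs0, hst⟩
    have hcomm : a * exp (s • a) * exp (s • b) + exp (s • a) * (b * exp (s • b))
        - (a + b) * (exp (s • a) * exp (s • b))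
          = (exp (s • a) * b - b * exp (s • a)) * exp (s • b) := by
      noncomm_ring
    calc _ ≤ ‖exp (s • a) * b - b * exp (s • a)‖ := by
          rw [hcomm, ← mul_assoc]
          exact norm_mul_mul_le_of_norm_le_one (hab _ (sub_nonneg.2 hst)) (hb s hs0) _
      _ ≤ ‖a * b - b * a‖ * s ^ 1 := by
          rw [norm_sub_rev, pow_one, mul_comm]
          exact norm_mul_exp_smul_sub_exp_smul_mul_le ha b hs0
  have := norm_sub_le_of_norm_deriv_le_mul_pow 1 ht hderiv hbound
  rw [norm_sub_rev]
  simp only [Pi.mul_apply, sub_zero, sub_self, zero_smul, exp_zero, one_mul, mul_one] at this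
  linarith

end ContractionSemigroup

theorem CStarRing.norm_le_one_of_mem_unitary {E : Type*} [NormedRing E] [StarRing E]
    [CStarRing E] {U : E} (hU : U ∈ unitary E) : ‖U‖ ≤ 1 := by
  rcases subsingleton_or_nontrivial E with _ | _
  · simp [Subsingleton.elim U 0]
  · exact (CStarRing.norm_of_mem_unitary hU).le

open Complex in
theorem norm_exp_smul_neg_I_smul_le_one_of_isSelfAdjoint {𝔸 : Type*} [CStarAlgebra 𝔸] {a : 𝔸}
    (ha : IsSelfAdjoint a) (s : ℝ) : ‖exp (s • (-I • a))‖ ≤ 1 := by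
  let +nondep : NormedAlgebra ℚ 𝔸 := .restrictScalars ℚ ℂ 𝔸
  rw [← smul_assoc, Complex.real_smul]
  refine CStarRing.norm_le_one_of_mem_unitary (exp_mem_unitary_of_mem_skewAdjoint ?_)
  exact IsSelfAdjoint.smul_mem_skewAdjoint (by simp [skewAdjoint.mem_iff]) ha

open ContinuousLinearMap

/-- First-order Trotter error bound for two self-adjoint operators. -/
theorem trotter_error_bound (n : ℕ)
    (A B : EuclideanSpace ℂ (Fin n) →L[ℂ] EuclideanSpace ℂ (Fin n))
    (hA : adjoint A = A) (hB : adjoint B = B) (t : ℝ) (ht : 0 ≤ t) :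
    ‖NormedSpace.exp ((-Complex.I * (t : ℂ)) • (A + B)) -
        NormedSpace.exp ((-Complex.I * (t : ℂ)) • A) *
          NormedSpace.exp ((-Complex.I * (t : ℂ)) • B)‖
      ≤ t ^ 2 / 2 * ‖A * B - B * A‖ := by
  have hA' : IsSelfAdjoint A := isSelfAdjoint_iff'.2 hA
  have hB' : IsSelfAdjoint B := isSelfAdjoint_iff'.2 hB
  have hsmul (M : EuclideanSpace ℂ (Fin n) →L[ℂ] EuclideanSpace ℂ (Fin n)) :
      (-Complex.I * (t : ℂ)) • M = t • (-Complex.I • M) := by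
    rw [← smul_assoc, Complex.real_smul, mul_comm]
  have hcomm : ‖(-Complex.I • A) * (-Complex.I • B) - (-Complex.I • B) * (-Complex.I • A)‖
      = ‖A * B - B * A‖ := by
    rw [smul_mul_assoc, mul_smul_comm, smul_smul, smul_mul_assoc, mul_smul_comm, smul_smul,
      ← smul_sub _ (A * B), norm_smul]
    simp
  rw [hsmul, hsmul, hsmul, smul_add, ← hcomm]
  refine norm_exp_add_sub_exp_mul_exp_le
    (fun s _ => norm_exp_smul_neg_I_smul_le_one_of_isSelfAdjoint hA' s)
    (fun s _ => norm_exp_smul_neg_I_smul_le_one_of_isSelfAdjoint hB' s) (fun s _ => ?_) ht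
  simpa only [smul_add] using
    norm_exp_smul_neg_I_smul_le_one_of_isSelfAdjoint (IsSelfAdjoint.add hA' hB') s
end
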